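/- Let G be a finite tree on a vertex set V and let h ≥ 1 be an integer. Assume that the diameter of G is exactly 2h+1, i.e., dist(u,w) ≤ 2h+1 for all u,w ∈ V and dist(a,b) = 2h+1 for some a,b ∈ V. Let c₀ and c₁ be adjacent vertices such that every vertex u ∈ V satisfies dist(u,c₀) ≤ h or dist(u,c₁) ≤ h (i.e., {c₀,c₁} is the central edge). Let v ∈ V be a vertex with dist(v,c₀) ≤ dist(v,c₁) and dist(v,c₀) ≥ h−1. Then every path in G starting at v whose length is at least 2h contains c₀ among its vertices. -/

import Mathlib

/-!
The central-edge condition gives `dist v c₀ ≤ h` and `dist c₀ w ≤ h + 1`. In a tree, a path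
from `v` to `w` avoiding `c₀` is at least two shorter than `dist v c₀ + dist c₀ w ≤ 2h + 1`,
hence has length less than `2h`.
-/

namespace SimpleGraph

variable {V : Type*} {G : SimpleGraph V} {u v w c : V}

lemma Walk.dist_add_dist_le_of_mem_support {r : G.Walk u v}
    (hr : r.length = G.dist u v) (hw : w ∈ r.support) :
    G.dist u w + G.dist w v ≤ G.dist u v := by
  classical
  rw [← hr, ← r.take_spec hw, Walk.length_append]
  exact Nat.add_le_add (dist_le _) (dist_le _)

lemma Walk.exists_ne_mem_support_of_not_isPath_append {p : G.Walk u v} {q : G.Walk v w}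
    (hp : p.IsPath) (hq : q.IsPath) (hpq : ¬(p.append q).IsPath) :
    ∃ x ≠ v, x ∈ p.support ∧ x ∈ q.support := by
  by_contra! hdisj
  refine hpq ?_
  rw [Walk.isPath_def, Walk.support_append, List.nodup_append]
  refine ⟨hp.support_nodup, hq.support_nodup.sublist q.support.tail_sublist, ?_⟩
  rintro x hx _ hy rfl
  have hxv : x ≠ v := by
    rintro rfl
    have hnodup := hq.support_nodup
    rw [← q.cons_tail_support, List.nodup_cons] at hnodup
    exact hnodup.1 hy
  exact hdisj x hxv hx (List.mem_of_mem_tail hy)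

lemma IsAcyclic.length_eq_dist_of_isPath (hG : G.IsAcyclic) {p : G.Walk u v} (hp : p.IsPath) :
    p.length = G.dist u v := by
  obtain ⟨q, hq, hqlen⟩ := p.reachable.exists_path_of_dist
  rw [← hqlen, Subtype.mk.inj <| (hG.subsingleton_path u v).elim ⟨p, hp⟩ ⟨q, hq⟩]

/-- The geodesics `u → c` and `c → v` cannot concatenate to the path `p`, so they meet again
at some `x ≠ c`, and the detour through `c` repeats the segment between `x` and `c`. -/
lemma IsAcyclic.length_add_two_le_of_notMem_support (hG : G.IsAcyclic) {p : G.Walk u v}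
    (hp : p.IsPath) (hc : G.Reachable u c) (hcp : c ∉ p.support) :
    p.length + 2 ≤ G.dist u c + G.dist c v := by
  classical
  obtain ⟨q₁, hq₁, hq₁len⟩ := hc.exists_path_of_dist
  obtain ⟨q₂, hq₂, hq₂len⟩ := (hc.symm.trans p.reachable).exists_path_of_dist
  have hnot : ¬(q₁.append q₂).IsPath := fun h ↦ hcp <| by
    rw [Subtype.mk.inj <| (hG.subsingleton_path u v).elim ⟨p, hp⟩ ⟨_, h⟩]
    exact Walk.mem_support_append_iff _ _ |>.mpr (.inl q₁.end_mem_support)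
  obtain ⟨x, hxc, hx₁, hx₂⟩ := Walk.exists_ne_mem_support_of_not_isPath_append hq₁ hq₂ hnot
  have hux := Walk.dist_add_dist_le_of_mem_support hq₁len hx₁
  have hxv := Walk.dist_add_dist_le_of_mem_support hq₂len hx₂
  have hcx : 0 < G.dist c x := (q₂.takeUntil x hx₂).reachable.pos_dist_of_ne hxc.symm
  have huv := (q₁.takeUntil x hx₁).reachable.dist_triangle_left v
  rw [dist_comm (u := x)] at hux
  rw [hG.length_eq_dist_of_isPath hp]
  omega

end SimpleGraph

theorem central_edge_endpoint_on_long_paths_general {V : Type*}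
    (G : SimpleGraph V) (hG : G.IsTree) (h : ℕ)
    (c₀ c₁ : V) (hadj : G.Adj c₀ c₁)
    (hcentral : ∀ u : V, G.dist u c₀ ≤ h ∨ G.dist u c₁ ≤ h)
    (v : V) (hclose : G.dist v c₀ ≤ G.dist v c₁) :
    ∀ (w : V) (p : G.Walk v w), p.IsPath → 2 * h ≤ p.length →
      c₀ ∈ p.support := by
  intro w p hp hlen
  by_contra hc₀
  have hvc₀ : G.dist v c₀ ≤ h := (hcentral v).elim id hclose.trans
  have hwc₀ : G.dist w c₀ ≤ h + 1 := by
    have htri := hadj.symm.reachable.dist_triangle_right w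
    rw [SimpleGraph.dist_eq_one_iff_adj.mpr hadj.symm] at htri
    rcases hcentral w with hw | hw <;> omega
  have hdetour := hG.isAcyclic.length_add_two_le_of_notMem_support hp (hG.connected v c₀) hc₀
  rw [SimpleGraph.dist_comm (u := c₀)] at hdetour
  omega

/-- In a finite tree of diameter exactly `2h+1` (`h ≥ 1`) with central edge
`{c₀,c₁}` (every vertex is within distance `h` of `c₀` or of `c₁`), every
path of length at least `2h` starting at a vertex `v` whose closest endpoint
of the central edge is `c₀` and with `dist(v,c₀) ≥ h−1` contains `c₀`. -/
theorem central_edge_endpoint_on_long_paths {V : Type*} [Fintype V]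
    (G : SimpleGraph V) (hG : G.IsTree) (h : ℕ) (hh : 1 ≤ h)
    (hdiam_le : ∀ u w : V, G.dist u w ≤ 2 * h + 1)
    (hdiam_eq : ∃ a b : V, G.dist a b = 2 * h + 1)
    (c₀ c₁ : V) (hadj : G.Adj c₀ c₁)
    (hcentral : ∀ u : V, G.dist u c₀ ≤ h ∨ G.dist u c₁ ≤ h)
    (v : V) (hclose : G.dist v c₀ ≤ G.dist v c₁) (hv : h - 1 ≤ G.dist v c₀) :
    ∀ (w : V) (p : G.Walk v w), p.IsPath → 2 * h ≤ p.length →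
      c₀ ∈ p.support :=
  central_edge_endpoint_on_long_paths_general G hG h c₀ c₁ hadj hcentral v hclose
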